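/- arXiv:1412.7907 — 4 statements merged into one kernel-verified Lean document; each statement's English description precedes it below -/
import Mathlib

section
/- The map R ↦ ‖R - K‖_F^2 + λ‖R^-‖_1 + γΣ_i(σ_i(R) - σ̄_R)^2, restricted to symmetric matrices with tr(R) = p, is a convex function of R. -/
/-!
For symmetric `R` we have `∑ i σ_i² = ‖R‖_F²` and `∑ i σ_i = tr R`, so the spectral penalty
`∑ i (σ_i - σ̄_R)² = ‖R‖_F² - (tr R)² / p` becomes the convex quadratic `‖R‖_F² - p` once
`tr R = p`. On the (convex) constraint set the objective thus agrees with a nonnegative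
combination of convex functions of single entries of `R`.
-/

open Matrix Finset

theorem ConvexOn.fun_sum {𝕜 E β ι : Type*} [Semiring 𝕜] [PartialOrder 𝕜] [AddCommMonoid E]
    [AddCommMonoid β] [PartialOrder β] [IsOrderedAddMonoid β] [SMul 𝕜 E] [Module 𝕜 β]
    {s : Set E} (hs : Convex 𝕜 s) {t : Finset ι} {f : ι → E → β}
    (hf : ∀ i ∈ t, ConvexOn 𝕜 s (f i)) : ConvexOn 𝕜 s fun x => ∑ i ∈ t, f i x := by
  classical
  induction t using Finset.induction_on with
  | empty => simpa only [sum_empty] using convexOn_const (0 : β) hs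
  | insert i t hi ih =>
    simp only [sum_insert hi]
    exact (hf i (mem_insert_self i t)).add (ih fun j hj => hf j (mem_insert_of_mem hj))

lemma convexOn_univ_sq_sub (c : ℝ) : ConvexOn ℝ Set.univ fun x : ℝ => (x - c) ^ 2 := by
  simpa [Function.comp_def, sub_eq_neg_add] using (Even.convexOn_pow even_two).translate_right (-c)

lemma convexOn_univ_comp_entry {m n : Type*} {φ : ℝ → ℝ} (hφ : ConvexOn ℝ Set.univ φ)
    (i : m) (j : n) : ConvexOn ℝ Set.univ fun R : Matrix m n ℝ => φ (R i j) :=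
  hφ.comp_linearMap (entryLinearMap ℝ ℝ i j)

lemma convexOn_univ_sum_sum_entry {m n : Type*} [Fintype m] [Fintype n] {φ : m → n → ℝ → ℝ}
    (hφ : ∀ i j, ConvexOn ℝ Set.univ (φ i j)) :
    ConvexOn ℝ Set.univ fun R : Matrix m n ℝ => ∑ i, ∑ j, φ i j (R i j) :=
  ConvexOn.fun_sum convex_univ fun i _ =>
    ConvexOn.fun_sum convex_univ fun j _ => convexOn_univ_comp_entry (hφ i j) i j

lemma Finset.sum_sub_mean_sq {ι : Type*} (s : Finset ι) (f : ι → ℝ) :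
    ∑ i ∈ s, (f i - (∑ j ∈ s, f j) / #s) ^ 2 = ∑ i ∈ s, f i ^ 2 - (∑ i ∈ s, f i) ^ 2 / #s := by
  simp only [sub_sq, sum_add_distrib, sum_sub_distrib, ← sum_mul, ← mul_sum, sum_const,
    nsmul_eq_mul]
  field_simp
  ring

lemma Matrix.IsHermitian.sum_eigenvalues_sq {n : Type*} [Fintype n] [DecidableEq n]
    {A : Matrix n n ℝ} (hA : A.IsHermitian) :
    ∑ i, hA.eigenvalues i ^ 2 = ∑ i, ∑ j, A i j ^ 2 := by
  have h_eig : (A * A).trace = ∑ i, hA.eigenvalues i ^ 2 := by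
    conv_lhs => rw [hA.spectral_theorem, ← map_mul, Unitary.conjStarAlgAut_apply,
      trace_mul_cycle, Unitary.coe_star_mul_self, one_mul, diagonal_mul_diagonal, trace_diagonal]
    simp [sq]
  have h_entries : (A * Aᴴ).trace = ∑ i, ∑ j, A i j ^ 2 := by
    simp [trace, mul_apply, sq]
  rw [← h_eig, ← h_entries, hA.eq]

lemma Matrix.IsHermitian.sum_eigenvalues_sub_mean_sq {n : Type*} [Fintype n] [DecidableEq n]
    {A : Matrix n n ℝ} (hA : A.IsHermitian) :
    ∑ i, (hA.eigenvalues i - (∑ j, hA.eigenvalues j) / Fintype.card n) ^ 2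
      = ∑ i, ∑ j, A i j ^ 2 - A.trace ^ 2 / Fintype.card n := by
  rw [← card_univ, sum_sub_mean_sq, hA.sum_eigenvalues_sq, hA.trace_eq_sum_eigenvalues]
  simp

lemma convex_setOf_isHermitian_trace_eq {n : Type*} [Fintype n] (c : ℝ) :
    Convex ℝ {R : Matrix n n ℝ | R.IsHermitian ∧ R.trace = c} := by
  rintro R ⟨hR, hRc⟩ S ⟨hS, hSc⟩ a b - - hab
  refine ⟨(hR.smul (.all a)).add (hS.smul (.all b)), ?_⟩
  rw [trace_add, trace_smul, trace_smul, hRc, hSc, smul_eq_mul, smul_eq_mul, ← add_mul, hab,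
    one_mul]

theorem jpen_objective_convex_general (p : ℕ) (K : Matrix (Fin p) (Fin p) ℝ)
    (lam gam : ℝ) (hlam : 0 < lam) (hgam : 0 < gam) :
    ConvexOn ℝ
      {R : Matrix (Fin p) (Fin p) ℝ | R.IsHermitian ∧ R.trace = (p : ℝ)}
      (fun R =>
        (∑ i, ∑ j, (R i j - K i j) ^ 2)
          + lam * (∑ i, ∑ j, if i ≠ j then |R i j| else 0)
          + gam * (if h : R.IsHermitian then
              ∑ i, (h.eigenvalues i - (∑ j, h.eigenvalues j) / p) ^ 2
            else 0)) := by
  have h_offDiag : ConvexOn ℝ Set.univ fun R : Matrix (Fin p) (Fin p) ℝ =>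
      ∑ i, ∑ j, if i ≠ j then |R i j| else 0 := by
    refine convexOn_univ_sum_sum_entry (φ := fun i j x => if i ≠ j then |x| else 0) fun i j => ?_
    by_cases hij : i ≠ j
    · simp only [if_pos hij]
      exact convexOn_univ_norm.congr fun x _ => Real.norm_eq_abs x
    · simpa only [if_neg hij] using convexOn_const (0 : ℝ) convex_univ
  have h_quadratic : ConvexOn ℝ Set.univ fun R : Matrix (Fin p) (Fin p) ℝ =>
      (∑ i, ∑ j, (R i j - K i j) ^ 2) + lam * (∑ i, ∑ j, if i ≠ j then |R i j| else 0)
        + gam * (∑ i, ∑ j, R i j ^ 2 - p) :=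
    ((convexOn_univ_sum_sum_entry fun i j => convexOn_univ_sq_sub (K i j)).add
      (h_offDiag.smul hlam.le)).add
      (((convexOn_univ_sum_sum_entry fun _ _ => Even.convexOn_pow even_two).add_const _).smul
        hgam.le)
  refine (h_quadratic.subset (Set.subset_univ _) (convex_setOf_isHermitian_trace_eq _)).congr ?_
  rintro R ⟨hR, hRp⟩
  have h_penalty := hR.sum_eigenvalues_sub_mean_sq
  rw [Fintype.card_fin, hRp, sq, mul_self_div_self] at h_penalty
  simp only [dif_pos hR]
  rw [h_penalty]

/-- The map `R ↦ ‖R-K‖_F² + λ‖R⁻‖₁ + γ ∑ i (σ_i(R) - σ̄_R)²`, restricted to symmetric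
matrices with `tr R = p`, is convex. -/
theorem jpen_objective_convex (p : ℕ) (K : Matrix (Fin p) (Fin p) ℝ)
    (hK : K.IsSymm) (lam gam : ℝ) (hlam : 0 < lam) (hgam : 0 < gam) :
    ConvexOn ℝ
      {R : Matrix (Fin p) (Fin p) ℝ | R.IsHermitian ∧ R.trace = (p : ℝ)}
      (fun R =>
        (∑ i, ∑ j, (R i j - K i j) ^ 2)
          + lam * (∑ i, ∑ j, if i ≠ j then |R i j| else 0)
          + gam * (if h : R.IsHermitian then
              ∑ i, (h.eigenvalues i - (∑ j, h.eigenvalues j) / p) ^ 2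
            else 0)) :=
  jpen_objective_convex_general p K lam gam hlam hgam
end

section
/- The minimizer over symmetric matrices Σ of ‖Σ - S‖_F^2 + γΣ_i(σ_i(Σ) - σ̄_Σ)^2 subject to tr(Σ) = tr(S) is Σ̂ = (S + γ t I)/(1+γ), where t = tr(S)/p. -/
/-!
For a symmetric `Σ`, the eigenvalue penalty `∑ (σ_i - σ̄)²` equals `‖Σ‖_F² - tr(Σ)²/p`, so on the
constraint set the objective is `‖Σ - S‖_F² + γ‖Σ‖_F²` up to a constant. Since
`(1 + γ) Σ̂ = S + γ t I`, completing the square around `Σ̂` leaves `(1 + γ)‖Σ - Σ̂‖_F²`: the cross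
term is a multiple of `tr(Σ - Σ̂) = 0`.
-/

open Matrix Finset

theorem Fintype.sum_sub_div_card_sq {ι K : Type*} [Fintype ι] [Field K] (f : ι → K) :
    ∑ i, (f i - (∑ j, f j) / Fintype.card ι) ^ 2
      = ∑ i, f i ^ 2 - (∑ i, f i) ^ 2 / Fintype.card ι := by
  set c : K := (Fintype.card ι : K)
  set T := ∑ i, f i
  have hexp : ∑ i, (f i - T / c) ^ 2 = ∑ i, f i ^ 2 - 2 * (T / c) * T + c * (T / c) ^ 2 := by
    simp only [sub_sq, sum_add_distrib, sum_sub_distrib, sum_const, card_univ, nsmul_eq_mul,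
      ← sum_mul, ← mul_sum]
    ring
  rw [hexp]
  rcases eq_or_ne c 0 with hc | hc
  · simp [hc]
  · field_simp
    ring

namespace Matrix

variable {n : Type*} [Fintype n]

theorem trace_mul_transpose_self (A : Matrix n n ℝ) : (A * Aᵀ).trace = ∑ i, ∑ j, A i j ^ 2 := by
  simp [trace, mul_apply, sq]

theorem IsHermitian.sum_sq_eigenvalues [DecidableEq n] {A : Matrix n n ℝ} (hA : A.IsHermitian) :
    ∑ i, hA.eigenvalues i ^ 2 = ∑ i, ∑ j, A i j ^ 2 := by
  have hAt : Aᵀ = A := by simpa [conjTranspose_eq_transpose_of_trivial] using hA.eq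
  rw [← trace_mul_transpose_self, hAt]
  conv_rhs => rw [hA.spectral_theorem, ← map_mul, Unitary.conjStarAlgAut_apply, trace_mul_cycle,
    Unitary.coe_star_mul_self, one_mul, diagonal_mul_diagonal, trace_diagonal]
  simp [sq]

theorem IsHermitian.sum_sq_eigenvalues_sub_mean [DecidableEq n] {A : Matrix n n ℝ}
    (hA : A.IsHermitian) :
    ∑ i, (hA.eigenvalues i - (∑ j, hA.eigenvalues j) / Fintype.card n) ^ 2
      = ∑ i, ∑ j, A i j ^ 2 - A.trace ^ 2 / Fintype.card n := by
  rw [Fintype.sum_sub_div_card_sq, hA.sum_sq_eigenvalues, hA.trace_eq_sum_eigenvalues]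
  simp

theorem trace_inv_smul_add_smul_one_div_card [DecidableEq n] (S : Matrix n n ℝ) {γ : ℝ}
    (hγ : 1 + γ ≠ 0) :
    ((1 + γ)⁻¹ • (S + (γ * (S.trace / Fintype.card n)) • 1)).trace = S.trace := by
  have hempty : (Fintype.card n : ℝ) = 0 → S.trace = 0 := fun h => by
    have : IsEmpty n := Fintype.card_eq_zero_iff.mp (by exact_mod_cast h)
    simp [trace]
  rw [trace_smul, trace_add, trace_smul, trace_one, smul_eq_mul, smul_eq_mul, mul_assoc,
    div_mul_cancel_of_imp hempty]
  field_simp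

theorem sum_sq_sub_add_mul_sum_sq_eq {X S A : Matrix n n ℝ} [DecidableEq n] {γ c : ℝ}
    (hA : (1 + γ) • A = S + c • 1) (htr : X.trace = A.trace) :
    ∑ i, ∑ j, (X i j - S i j) ^ 2 + γ * ∑ i, ∑ j, X i j ^ 2
      = ∑ i, ∑ j, (A i j - S i j) ^ 2 + γ * ∑ i, ∑ j, A i j ^ 2
        + (1 + γ) * ∑ i, ∑ j, (X i j - A i j) ^ 2 := by
  have hcross : ∑ i, ∑ j, (X i j - A i j) * ((1 + γ) * A i j - S i j) = 0 := by
    have hentry : ∀ i j, (1 + γ) * A i j - S i j = c * (1 : Matrix n n ℝ) i j := fun i j => by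
      have := congrFun₂ hA i j
      simp only [smul_apply, add_apply, smul_eq_mul] at this
      linarith
    simp only [hentry, one_apply, mul_ite, mul_one, mul_zero, sum_ite_eq, mem_univ, if_true]
    rw [← sum_mul, sum_sub_distrib]
    change (X.trace - A.trace) * c = 0
    rw [htr, sub_self, zero_mul]
  have hexpand : ∀ i j, (X i j - S i j) ^ 2 + γ * X i j ^ 2
      = (A i j - S i j) ^ 2 + γ * A i j ^ 2 + (1 + γ) * (X i j - A i j) ^ 2
        + 2 * ((X i j - A i j) * ((1 + γ) * A i j - S i j)) := fun i j => by ring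
  calc _ = ∑ i, ∑ j, ((X i j - S i j) ^ 2 + γ * X i j ^ 2) := by
        simp only [mul_sum, ← sum_add_distrib]
    _ = _ := by
        simp only [hexpand, sum_add_distrib, ← mul_sum, hcross]
        ring

end Matrix

theorem eigen_penalty_minimizer_general (p : ℕ) (S : Matrix (Fin p) (Fin p) ℝ)
    (hS : S.IsHermitian) (gam : ℝ) (hgam : 0 < gam) :
    ∀ Sig : Matrix (Fin p) (Fin p) ℝ, Sig.IsHermitian → Sig.trace = S.trace →
      (∑ i, ∑ j, (((1 + gam)⁻¹ •
            (S + (gam * (S.trace / p)) • (1 : Matrix (Fin p) (Fin p) ℝ))) i j - S i j) ^ 2)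
        + gam * (if h : ((1 + gam)⁻¹ •
              (S + (gam * (S.trace / p)) • (1 : Matrix (Fin p) (Fin p) ℝ))).IsHermitian then
            ∑ i, (h.eigenvalues i - (∑ j, h.eigenvalues j) / p) ^ 2 else 0)
      ≤ (∑ i, ∑ j, (Sig i j - S i j) ^ 2)
        + gam * (if h : Sig.IsHermitian then
            ∑ i, (h.eigenvalues i - (∑ j, h.eigenvalues j) / p) ^ 2 else 0) := by
  intro Sig hSig htr
  have h1g : 1 + gam ≠ 0 := by positivity
  set A : Matrix (Fin p) (Fin p) ℝ :=
    (1 + gam)⁻¹ • (S + (gam * (S.trace / p)) • (1 : Matrix (Fin p) (Fin p) ℝ))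
  have hA : A.IsHermitian :=
    (hS.add (isHermitian_one.smul (IsSelfAdjoint.all _))).smul (IsSelfAdjoint.all _)
  have hAtr : A.trace = S.trace := by
    have := trace_inv_smul_add_smul_one_div_card S h1g
    rwa [Fintype.card_fin] at this
  have hpenalty (M : Matrix (Fin p) (Fin p) ℝ) (hM : M.IsHermitian) :
      ∑ i, (hM.eigenvalues i - (∑ j, hM.eigenvalues j) / p) ^ 2
        = ∑ i, ∑ j, M i j ^ 2 - M.trace ^ 2 / p := by
    simpa using hM.sum_sq_eigenvalues_sub_mean
  have hsplit := sum_sq_sub_add_mul_sum_sq_eq (X := Sig) (smul_inv_smul₀ h1g _)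
    (htr.trans hAtr.symm)
  have hdist : 0 ≤ (1 + gam) * ∑ i, ∑ j, (Sig i j - A i j) ^ 2 := by positivity
  rw [dif_pos hA, dif_pos hSig, hpenalty A hA, hpenalty Sig hSig, hAtr, htr]
  linarith

/-- The minimizer over symmetric `Σ` with `tr Σ = tr S` of
`‖Σ - S‖_F² + γ ∑ i (σ_i(Σ) - σ̄_Σ)²` is `Σ̂ = (S + γ t I)/(1+γ)`, `t = tr(S)/p`. -/
theorem eigen_penalty_minimizer (p : ℕ) (hp : 0 < p) (S : Matrix (Fin p) (Fin p) ℝ)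
    (hS : S.IsHermitian) (gam : ℝ) (hgam : 0 < gam) :
    ∀ Sig : Matrix (Fin p) (Fin p) ℝ, Sig.IsHermitian → Sig.trace = S.trace →
      (∑ i, ∑ j, (((1 + gam)⁻¹ •
            (S + (gam * (S.trace / p)) • (1 : Matrix (Fin p) (Fin p) ℝ))) i j - S i j) ^ 2)
        + gam * (if h : ((1 + gam)⁻¹ •
              (S + (gam * (S.trace / p)) • (1 : Matrix (Fin p) (Fin p) ℝ))).IsHermitian then
            ∑ i, (h.eigenvalues i - (∑ j, h.eigenvalues j) / p) ^ 2 else 0)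
      ≤ (∑ i, ∑ j, (Sig i j - S i j) ^ 2)
        + gam * (if h : Sig.IsHermitian then
            ∑ i, (h.eigenvalues i - (∑ j, h.eigenvalues j) / p) ^ 2 else 0) :=
  eigen_penalty_minimizer_general p S hS gam hgam
end

section
/- For λ > 0, the unique minimizer over symmetric matrices Σ of ‖Σ - S‖_F^2 + λ‖Σ^-‖_1 is given entrywise by Σ̂_ii = S_ii and Σ̂_ij = sign(S_ij)·max(|S_ij| - λ/2, 0) for i ≠ j (the soft-thresholding estimator). -/
open Matrix Finset

lemma scalar_key (lam s x t : ℝ) (hlam : 0 < lam)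
    (ht : t = Real.sign s * max (|s| - lam / 2) 0) :
    (t - s) ^ 2 + lam * |t| + (x - t) ^ 2 ≤ (x - s) ^ 2 + lam * |x| := by
  have hx1 := le_abs_self x
  have hx2 := neg_abs_le x
  rcases lt_trichotomy s 0 with hs | hs | hs
  · rw [Real.sign_of_neg hs, abs_of_neg hs] at ht
    rcases le_or_gt (-s - lam / 2) 0 with h | h
    · have ht0 : t = 0 := by rw [ht, max_eq_right h]; ring
      rw [ht0, abs_zero]; nlinarith
    · have ht0 : t = s + lam / 2 := by rw [ht, max_eq_left h.le]; ring
      have htneg : t < 0 := by nlinarith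
      rw [abs_of_neg htneg]; nlinarith
  · subst hs
    have ht0 : t = 0 := by simp [ht]
    rw [ht0, abs_zero]; nlinarith
  · rw [Real.sign_of_pos hs, abs_of_pos hs] at ht
    rcases le_or_gt (s - lam / 2) 0 with h | h
    · have ht0 : t = 0 := by rw [ht, max_eq_right h]; ring
      rw [ht0, abs_zero]; nlinarith
    · have ht0 : t = s - lam / 2 := by rw [ht, max_eq_left h.le]; ring
      have htpos : 0 < t := by nlinarith
      rw [abs_of_pos htpos]; nlinarith

/-- For `λ > 0`, the unique minimizer over symmetric matrices of
`‖Σ - S‖_F² + λ‖Σ⁻‖₁` is the soft-thresholding estimator with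
`Σ̂_ii = S_ii` and `Σ̂_ij = sign(S_ij)·max(|S_ij| - λ/2, 0)` for `i ≠ j`. -/
theorem soft_threshold_unique_minimizer (p : ℕ) (S : Matrix (Fin p) (Fin p) ℝ)
    (hS : S.IsSymm) (lam : ℝ) (hlam : 0 < lam) :
    ∀ Sig : Matrix (Fin p) (Fin p) ℝ, Sig.IsSymm →
      Sig ≠ (Matrix.of fun i j =>
        if i = j then S i i else Real.sign (S i j) * max (|S i j| - lam / 2) 0) →
      (∑ i, ∑ j, ((Matrix.of fun i j =>
            if i = j then S i i else Real.sign (S i j) * max (|S i j| - lam / 2) 0) i j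
              - S i j) ^ 2)
        + lam * (∑ i, ∑ j, if i ≠ j then
            |(Matrix.of fun i j =>
              if i = j then S i i else Real.sign (S i j) * max (|S i j| - lam / 2) 0) i j|
          else 0)
      < (∑ i, ∑ j, (Sig i j - S i j) ^ 2)
        + lam * (∑ i, ∑ j, if i ≠ j then |Sig i j| else 0) := by
  intro Sig hsym hne
  set T : Matrix (Fin p) (Fin p) ℝ := Matrix.of fun i j =>
    if i = j then S i i else Real.sign (S i j) * max (|S i j| - lam / 2) 0 with hT
  -- pointwise inequality
  have key : ∀ i j, (T i j - S i j) ^ 2 + lam * (if i ≠ j then |T i j| else 0)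
      + (Sig i j - T i j) ^ 2
      ≤ (Sig i j - S i j) ^ 2 + lam * (if i ≠ j then |Sig i j| else 0) := by
    intro i j
    by_cases hij : i = j
    · subst hij
      simp [hT]
    · have hTij : T i j = Real.sign (S i j) * max (|S i j| - lam / 2) 0 := by
        simp [hT, hij]
      simp only [hij, if_neg, ne_eq, not_false_eq_true, if_pos]
      exact scalar_key lam (S i j) (Sig i j) (T i j) hlam hTij
  -- strict slack
  obtain ⟨i₀, hi₀⟩ : ∃ i, Sig i ≠ T i := by
    by_contra h; push_neg at h; exact hne (funext h)
  obtain ⟨j₀, hj₀⟩ : ∃ j, Sig i₀ j ≠ T i₀ j := by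
    by_contra h; push_neg at h; exact hi₀ (funext h)
  have hpos : 0 < ∑ i, ∑ j, (Sig i j - T i j) ^ 2 := by
    apply Finset.sum_pos' (fun i _ => Finset.sum_nonneg fun j _ => sq_nonneg _)
    refine ⟨i₀, Finset.mem_univ _, Finset.sum_pos' (fun j _ => sq_nonneg _)
      ⟨j₀, Finset.mem_univ _, ?_⟩⟩
    exact pow_pos (abs_pos.mpr (sub_ne_zero.mpr hj₀)) 2 |>.trans_eq (by rw [sq_abs])
  have hsum : (∑ i, ∑ j, (T i j - S i j) ^ 2)
      + lam * (∑ i, ∑ j, if i ≠ j then |T i j| else 0)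
      + ∑ i, ∑ j, (Sig i j - T i j) ^ 2
      ≤ (∑ i, ∑ j, (Sig i j - S i j) ^ 2)
      + lam * (∑ i, ∑ j, if i ≠ j then |Sig i j| else 0) := by
    simp only [Finset.mul_sum, ← Finset.sum_add_distrib]
    exact Finset.sum_le_sum fun i _ => Finset.sum_le_sum fun j _ => key i j
  linarith
end

section
/- For p×p real matrices, if A, B are symmetric and Δ = A - B, then |tr(Δ(B - C))| ≤ (max_{i≠j} |B_ij - C_ij|)·‖Δ^-‖_1 + √p·(max_i |B_ii - C_ii|)·‖Δ^+‖_F, where Δ^- is Δ with the diagonal set to zero and Δ^+ is the diagonal part of Δ. -/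
open Matrix Finset

/-!
Expanding the trace entrywise, `tr(ΔD) = ∑ᵢ ∑ⱼ Δᵢⱼ Dⱼᵢ`. Bounding `|Dⱼᵢ|` by `a` off the diagonal and
by `b` on it gives `a ‖Δ⁻‖₁ + b ∑ᵢ |Δᵢᵢ|`, and Cauchy–Schwarz against the all-ones vector turns
`∑ᵢ |Δᵢᵢ|` into `√p ‖Δ⁺‖_F`.
-/

theorem Real.sum_abs_le_sqrt_card_mul_sqrt_sum_sq {ι : Type*} (s : Finset ι) (f : ι → ℝ) :
    ∑ i ∈ s, |f i| ≤ √(#s : ℝ) * √(∑ i ∈ s, f i ^ 2) := by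
  simpa using Real.sum_mul_le_sqrt_mul_sqrt s (fun _ ↦ 1) (fun i ↦ |f i|)

theorem Matrix.trace_mul_eq_sum_sum {n R : Type*} [Fintype n] [NonUnitalNonAssocSemiring R]
    (M N : Matrix n n R) : (M * N).trace = ∑ i, ∑ j, M i j * N j i := by
  simp only [trace, diag, mul_apply]

section TraceBound

variable {n : Type*} [Fintype n] [DecidableEq n] (M N : Matrix n n ℝ) {a b : ℝ}

theorem Matrix.sum_abs_mul_le_of_abs_le (ha : ∀ i j, i ≠ j → |N i j| ≤ a)
    (hb : ∀ i, |N i i| ≤ b) (i : n) :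
    ∑ j, |M i j * N j i| ≤ a * ∑ j, (if i ≠ j then |M i j| else 0) + b * |M i i| := by
  calc ∑ j, |M i j * N j i|
      ≤ ∑ j, (a * (if i ≠ j then |M i j| else 0) + if i = j then b * |M i j| else 0) := by
        refine sum_le_sum fun j _ ↦ ?_
        rw [abs_mul, mul_comm]
        rcases eq_or_ne i j with rfl | hij
        · simpa using mul_le_mul_of_nonneg_right (hb i) (abs_nonneg (M i i))
        · simpa [hij] using mul_le_mul_of_nonneg_right (ha j i hij.symm) (abs_nonneg (M i j))
    _ = a * ∑ j, (if i ≠ j then |M i j| else 0) + b * |M i i| := by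
        simp [sum_add_distrib, mul_sum]

theorem Matrix.abs_trace_mul_le_of_abs_le (ha : ∀ i j, i ≠ j → |N i j| ≤ a)
    (hb : ∀ i, |N i i| ≤ b) :
    |(M * N).trace| ≤ a * (∑ i, ∑ j, if i ≠ j then |M i j| else 0) + b * ∑ i, |M i i| := by
  calc |(M * N).trace| ≤ ∑ i, ∑ j, |M i j * N j i| := by
        rw [trace_mul_eq_sum_sum]
        exact (abs_sum_le_sum_abs _ _).trans (sum_le_sum fun i _ ↦ abs_sum_le_sum_abs _ _)
    _ ≤ ∑ i, (a * ∑ j, (if i ≠ j then |M i j| else 0) + b * |M i i|) :=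
        sum_le_sum fun i _ ↦ sum_abs_mul_le_of_abs_le M N ha hb i
    _ = a * (∑ i, ∑ j, if i ≠ j then |M i j| else 0) + b * ∑ i, |M i i| := by
        rw [sum_add_distrib, mul_sum, mul_sum]

end TraceBound

theorem trace_cross_term_bound_general (p : ℕ)
    (A B C : Matrix (Fin p) (Fin p) ℝ)
    (a b : ℝ)
    (ha : ∀ i j, i ≠ j → |B i j - C i j| ≤ a)
    (hb : ∀ i, |B i i - C i i| ≤ b) :
    |((A - B) * (B - C)).trace|
      ≤ a * (∑ i, ∑ j, if i ≠ j then |(A - B) i j| else 0)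
        + Real.sqrt p * b * Real.sqrt (∑ i, ((A - B) i i) ^ 2) := by
  obtain hp | ⟨⟨i⟩⟩ := isEmpty_or_nonempty (Fin p)
  · simp [trace]
  have hb₀ : 0 ≤ b := (abs_nonneg _).trans (hb i)
  calc |((A - B) * (B - C)).trace|
      ≤ a * (∑ i, ∑ j, if i ≠ j then |(A - B) i j| else 0) + b * ∑ i, |(A - B) i i| :=
        abs_trace_mul_le_of_abs_le _ _ ha hb
    _ ≤ a * (∑ i, ∑ j, if i ≠ j then |(A - B) i j| else 0)
          + b * (Real.sqrt p * Real.sqrt (∑ i, ((A - B) i i) ^ 2)) := by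
        gcongr
        simpa using Real.sum_abs_le_sqrt_card_mul_sqrt_sum_sq univ fun i ↦ (A - B) i i
    _ = _ := by ring

/-- If `Δ = A - B` with `A, B` symmetric, then
`|tr(Δ(B-C))| ≤ (max_{i≠j}|B_ij - C_ij|)·‖Δ⁻‖₁ + √p·(max_i |B_ii - C_ii|)·‖Δ⁺‖_F`,
stated with `a` (resp. `b`) an upper bound on the off-diagonal (resp. diagonal)
entrywise differences, as in the maxima. -/
theorem trace_cross_term_bound (p : ℕ)
    (A B C : Matrix (Fin p) (Fin p) ℝ)
    (hA : A.IsSymm) (hB : B.IsSymm) (hC : C.IsSymm)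
    (a b : ℝ)
    (ha : ∀ i j, i ≠ j → |B i j - C i j| ≤ a)
    (hb : ∀ i, |B i i - C i i| ≤ b) :
    |((A - B) * (B - C)).trace|
      ≤ a * (∑ i, ∑ j, if i ≠ j then |(A - B) i j| else 0)
        + Real.sqrt p * b * Real.sqrt (∑ i, ((A - B) i i) ^ 2) :=
  trace_cross_term_bound_general p A B C a b ha hb
end
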